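/- Let f = (f¹,f²,f³) : ℝ³ → ℝ³ be a smooth contact map of the first Heisenberg group and ω₁, ω₂ : ℝ³ → ℝ smooth. Set λ(f) := Xf¹·Yf² − Xf²·Yf¹, a := (ω₁ ∘ f)·Xf¹ + (ω₂ ∘ f)·Xf², b := (ω₁ ∘ f)·Yf¹ + (ω₂ ∘ f)·Yf². Then the following two identities hold: XX b − XY a − T a = λ(f)·[ ((XXω₂ − XYω₁ − Tω₁) ∘ f)·Xf¹ + ((YXω₂ − YYω₁ − Tω₂) ∘ f)·Xf² ] and YX b − YY a − T b = λ(f)·[ ((XXω₂ − XYω₁ − Tω₁) ∘ f)·Yf¹ + ((YXω₂ − YYω₁ − Tω₂) ∘ f)·Yf² ]. (This expresses that the pullback by f commutes with the second-order Rumin operator D in ℍ¹: for ω = ω₁ dx + ω₂ dy one has f^* D ω = D f^* ω.) -/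

import Mathlib

/-- The horizontal vector field `X g := ∂_x g − (y/2)·∂_t g` on `ℝ³` with coordinates
`(x, y, t) = (p 0, p 1, p 2)`. -/
noncomputable def Xd (g : (Fin 3 → ℝ) → ℝ) : (Fin 3 → ℝ) → ℝ :=
  fun p => fderiv ℝ g p (Pi.single 0 1) - p 1 / 2 * fderiv ℝ g p (Pi.single 2 1)

/-- The horizontal vector field `Y g := ∂_y g + (x/2)·∂_t g`. -/
noncomputable def Yd (g : (Fin 3 → ℝ) → ℝ) : (Fin 3 → ℝ) → ℝ :=
  fun p => fderiv ℝ g p (Pi.single 1 1) + p 0 / 2 * fderiv ℝ g p (Pi.single 2 1)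

/-- The vertical vector field `T g := ∂_t g`. -/
noncomputable def Td (g : (Fin 3 → ℝ) → ℝ) : (Fin 3 → ℝ) → ℝ :=
  fun p => fderiv ℝ g p (Pi.single 2 1)

/-- A map `f = (f¹, f², f³) : ℝ³ → ℝ³` is a contact map of the first Heisenberg group if
`Xf³ + (1/2)f²·Xf¹ − (1/2)f¹·Xf² = 0` and `Yf³ + (1/2)f²·Yf¹ − (1/2)f¹·Yf² = 0`
identically. -/
def IsContact3 (f : (Fin 3 → ℝ) → (Fin 3 → ℝ)) : Prop :=
  (∀ p, Xd (fun q => f q 2) p + (1/2) * f p 1 * Xd (fun q => f q 0) p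
      - (1/2) * f p 0 * Xd (fun q => f q 1) p = 0)
  ∧ (∀ p, Yd (fun q => f q 2) p + (1/2) * f p 1 * Yd (fun q => f q 0) p
      - (1/2) * f p 0 * Yd (fun q => f q 1) p = 0)

/-- `λ(f) := Xf¹·Yf² − Xf²·Yf¹`. -/
noncomputable def lam3 (f : (Fin 3 → ℝ) → (Fin 3 → ℝ)) : (Fin 3 → ℝ) → ℝ :=
  fun p => Xd (fun q => f q 0) p * Yd (fun q => f q 1) p
    - Xd (fun q => f q 1) p * Yd (fun q => f q 0) p

noncomputable def pd (i : Fin 3) (g : (Fin 3 → ℝ) → ℝ) : (Fin 3 → ℝ) → ℝ :=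
  fun p => fderiv ℝ g p (Pi.single i 1)

lemma contDiff_coord (j : Fin 3) : ContDiff ℝ (⊤ : ℕ∞) (fun p : Fin 3 → ℝ => p j) :=
  (ContinuousLinearMap.proj j : (Fin 3 → ℝ) →L[ℝ] ℝ).contDiff

lemma pd_contDiff {g : (Fin 3 → ℝ) → ℝ} (hg : ContDiff ℝ (⊤ : ℕ∞) g) (i : Fin 3) :
    ContDiff ℝ (⊤ : ℕ∞) (pd i g) :=
  (hg.fderiv_right (le_refl _)).clm_apply contDiff_const

lemma pd_add {g h : (Fin 3 → ℝ) → ℝ} {p : Fin 3 → ℝ} (hg : DifferentiableAt ℝ g p)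
    (hh : DifferentiableAt ℝ h p) (i : Fin 3) :
    pd i (fun q => g q + h q) p = pd i g p + pd i h p := by
  simp [pd, fderiv_fun_add hg hh]

lemma pd_sub {g h : (Fin 3 → ℝ) → ℝ} {p : Fin 3 → ℝ} (hg : DifferentiableAt ℝ g p)
    (hh : DifferentiableAt ℝ h p) (i : Fin 3) :
    pd i (fun q => g q - h q) p = pd i g p - pd i h p := by
  simp [pd, fderiv_fun_sub hg hh]

lemma pd_mul {g h : (Fin 3 → ℝ) → ℝ} {p : Fin 3 → ℝ} (hg : DifferentiableAt ℝ g p)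
    (hh : DifferentiableAt ℝ h p) (i : Fin 3) :
    pd i (fun q => g q * h q) p = pd i g p * h p + g p * pd i h p := by
  simp [pd, fderiv_fun_mul hg hh]; ring

lemma pd_const_mul {g : (Fin 3 → ℝ) → ℝ} {p : Fin 3 → ℝ} (hg : DifferentiableAt ℝ g p)
    (c : ℝ) (i : Fin 3) :
    pd i (fun q => c * g q) p = c * pd i g p := by
  simp [pd, fderiv_const_mul hg]

lemma pd_coord (i j : Fin 3) (p : Fin 3 → ℝ) :
    pd i (fun q => q j) p = if i = j then 1 else 0 := by
  have : fderiv ℝ (fun q : Fin 3 → ℝ => q j) p = ContinuousLinearMap.proj j :=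
    (ContinuousLinearMap.proj j : (Fin 3 → ℝ) →L[ℝ] ℝ).fderiv
  simp [pd, this, Pi.single_apply, eq_comm]

lemma pd_comm {g : (Fin 3 → ℝ) → ℝ} (hg : ContDiff ℝ (⊤ : ℕ∞) g) (i j : Fin 3) (p : Fin 3 → ℝ) :
    pd i (pd j g) p = pd j (pd i g) p := by
  have hd : DifferentiableAt ℝ (fderiv ℝ g) p :=
    ((hg.fderiv_right (m := (⊤ : ℕ∞)) (le_refl _)).differentiable (by simp)) p
  have key : ∀ v w : Fin 3 → ℝ,
      fderiv ℝ (fun q => fderiv ℝ g q v) p w = fderiv ℝ (fderiv ℝ g) p w v := by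
    intro v w
    have : fderiv ℝ (fun q => fderiv ℝ g q v) p
        = ((fderiv ℝ g p).comp (fderiv ℝ (fun _ : Fin 3 → ℝ => v) p))
          + (fderiv ℝ (fderiv ℝ g) p).flip v := by
      simpa using fderiv_clm_apply hd (differentiableAt_const v)
    simp [this]
  have symm : IsSymmSndFDerivAt ℝ g p :=
    (hg.contDiffAt).isSymmSndFDerivAt (by rw [minSmoothness_of_isRCLikeNormedField]; exact WithTop.coe_le_coe.mpr (le_top : (2 : ℕ∞) ≤ ⊤))
  show fderiv ℝ (fun q => fderiv ℝ g q (Pi.single j 1)) p (Pi.single i 1) = _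
  rw [key]
  rw [symm (Pi.single i 1) (Pi.single j 1)]
  rw [← key]
  rfl

lemma clm_expand (L : (Fin 3 → ℝ) →L[ℝ] ℝ) (v : Fin 3 → ℝ) :
    L v = v 0 * L (Pi.single 0 1) + v 1 * L (Pi.single 1 1) + v 2 * L (Pi.single 2 1) := by
  have h : v = ∑ j : Fin 3, (v j) • (Pi.single j 1 : Fin 3 → ℝ) := by
    funext k
    simp [Pi.single_apply, Finset.sum_ite_eq, Finset.sum_apply]
  conv_lhs => rw [h]
  rw [map_sum, Fin.sum_univ_three]
  simp [smul_eq_mul]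

lemma pd_component {f : (Fin 3 → ℝ) → (Fin 3 → ℝ)} (hf : ContDiff ℝ (⊤ : ℕ∞) f)
    (i j : Fin 3) (p : Fin 3 → ℝ) :
    pd i (fun q => f q j) p = fderiv ℝ f p (Pi.single i 1) j := by
  have h : fderiv ℝ ((ContinuousLinearMap.proj j : (Fin 3 → ℝ) →L[ℝ] ℝ) ∘ f) p
      = (ContinuousLinearMap.proj j : (Fin 3 → ℝ) →L[ℝ] ℝ).comp (fderiv ℝ f p) := by
    rw [fderiv_comp p ((ContinuousLinearMap.proj j).differentiableAt)
      ((hf.differentiable (by simp)) p), ContinuousLinearMap.fderiv]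
  have h2 : pd i ((ContinuousLinearMap.proj j : (Fin 3 → ℝ) →L[ℝ] ℝ) ∘ f) p
      = fderiv ℝ f p (Pi.single i 1) j := by
    rw [pd, h]; rfl
  exact h2

lemma pd_comp {f : (Fin 3 → ℝ) → (Fin 3 → ℝ)} {g : (Fin 3 → ℝ) → ℝ}
    (hf : ContDiff ℝ (⊤ : ℕ∞) f) (hg : ContDiff ℝ (⊤ : ℕ∞) g) (i : Fin 3) (p : Fin 3 → ℝ) :
    pd i (fun q => g (f q)) p
      = pd 0 g (f p) * pd i (fun q => f q 0) p
        + pd 1 g (f p) * pd i (fun q => f q 1) p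
        + pd 2 g (f p) * pd i (fun q => f q 2) p := by
  have hc : fderiv ℝ (g ∘ f) p = (fderiv ℝ g (f p)).comp (fderiv ℝ f p) :=
    fderiv_comp p ((hg.differentiable (by simp)) (f p)) ((hf.differentiable (by simp)) p)
  have : pd i (g ∘ f) p = (fderiv ℝ g (f p)) (fderiv ℝ f p (Pi.single i 1)) := by
    rw [pd, hc]; rfl
  rw [show (fun q => g (f q)) = g ∘ f from rfl, this,
    clm_expand (fderiv ℝ g (f p)) (fderiv ℝ f p (Pi.single i 1)),
    pd_component hf i 0 p, pd_component hf i 1 p, pd_component hf i 2 p]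
  show _ = _ * fderiv ℝ f p (Pi.single i 1) 0 + _ * fderiv ℝ f p (Pi.single i 1) 1
      + _ * fderiv ℝ f p (Pi.single i 1) 2
  simp only [pd]
  ring

-- chunk 3 proper
lemma dA {g : (Fin 3 → ℝ) → ℝ} (hg : ContDiff ℝ (⊤ : ℕ∞) g) (p : Fin 3 → ℝ) :
    DifferentiableAt ℝ g p := (hg.differentiable (by simp)) p

lemma contDiff_coord_div2 (j : Fin 3) : ContDiff ℝ (⊤ : ℕ∞) (fun p : Fin 3 → ℝ => p j / 2) :=
  (contDiff_coord j).div_const 2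

lemma pd_coord_div2 (i j : Fin 3) (p : Fin 3 → ℝ) :
    pd i (fun q => q j / 2) p = (if i = j then 1 else 0) / 2 := by
  have h : (fun q : Fin 3 → ℝ => q j / 2) = fun q => (2 : ℝ)⁻¹ * q j := by
    funext q; ring
  rw [h, pd_const_mul (dA (contDiff_coord j) p), pd_coord]
  split_ifs <;> norm_num

lemma Xd_pd (g : (Fin 3 → ℝ) → ℝ) (p : Fin 3 → ℝ) :
    Xd g p = pd 0 g p - p 1 / 2 * pd 2 g p := rfl
lemma Yd_pd (g : (Fin 3 → ℝ) → ℝ) (p : Fin 3 → ℝ) :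
    Yd g p = pd 1 g p + p 0 / 2 * pd 2 g p := rfl
lemma Td_pd (g : (Fin 3 → ℝ) → ℝ) (p : Fin 3 → ℝ) : Td g p = pd 2 g p := rfl

lemma Xd_contDiff {g : (Fin 3 → ℝ) → ℝ} (hg : ContDiff ℝ (⊤ : ℕ∞) g) : ContDiff ℝ (⊤ : ℕ∞) (Xd g) :=
  (pd_contDiff hg 0).sub ((contDiff_coord_div2 1).mul (pd_contDiff hg 2))
lemma Yd_contDiff {g : (Fin 3 → ℝ) → ℝ} (hg : ContDiff ℝ (⊤ : ℕ∞) g) : ContDiff ℝ (⊤ : ℕ∞) (Yd g) :=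
  (pd_contDiff hg 1).add ((contDiff_coord_div2 0).mul (pd_contDiff hg 2))
lemma Td_contDiff {g : (Fin 3 → ℝ) → ℝ} (hg : ContDiff ℝ (⊤ : ℕ∞) g) : ContDiff ℝ (⊤ : ℕ∞) (Td g) :=
  pd_contDiff hg 2

lemma pd_Xd {g : (Fin 3 → ℝ) → ℝ} (hg : ContDiff ℝ (⊤ : ℕ∞) g) (i : Fin 3) (p : Fin 3 → ℝ) :
    pd i (Xd g) p = pd i (pd 0 g) p
      - ((if i = 1 then 1 else 0) / 2 * pd 2 g p + p 1 / 2 * pd i (pd 2 g) p) := by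
  show pd i (fun q => pd 0 g q - q 1 / 2 * pd 2 g q) p = _
  rw [pd_sub (dA (pd_contDiff hg 0) p)
      (dA ((contDiff_coord_div2 1).mul (pd_contDiff hg 2)) p),
    pd_mul (dA (contDiff_coord_div2 1) p) (dA (pd_contDiff hg 2) p),
    pd_coord_div2]

lemma pd_Yd {g : (Fin 3 → ℝ) → ℝ} (hg : ContDiff ℝ (⊤ : ℕ∞) g) (i : Fin 3) (p : Fin 3 → ℝ) :
    pd i (Yd g) p = pd i (pd 1 g) p
      + ((if i = 0 then 1 else 0) / 2 * pd 2 g p + p 0 / 2 * pd i (pd 2 g) p) := by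
  show pd i (fun q => pd 1 g q + q 0 / 2 * pd 2 g q) p = _
  rw [pd_add (dA (pd_contDiff hg 1) p)
      (dA ((contDiff_coord_div2 0).mul (pd_contDiff hg 2)) p),
    pd_mul (dA (contDiff_coord_div2 0) p) (dA (pd_contDiff hg 2) p),
    pd_coord_div2]

lemma comm_XY {g : (Fin 3 → ℝ) → ℝ} (hg : ContDiff ℝ (⊤ : ℕ∞) g) (p : Fin 3 → ℝ) :
    Xd (Yd g) p - Yd (Xd g) p = Td g p := by
  rw [Xd_pd, Yd_pd, Td_pd, pd_Yd hg 0 p, pd_Yd hg 2 p, pd_Xd hg 1 p, pd_Xd hg 2 p,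
    pd_comm hg 0 1, pd_comm hg 0 2, pd_comm hg 1 2,
    if_neg (show ¬(2:Fin 3) = 0 by decide), if_neg (show ¬(2:Fin 3) = 1 by decide),
    if_pos (rfl : (0:Fin 3) = 0), if_pos (rfl : (1:Fin 3) = 1)]
  ring

lemma comm_XT {g : (Fin 3 → ℝ) → ℝ} (hg : ContDiff ℝ (⊤ : ℕ∞) g) (p : Fin 3 → ℝ) :
    Xd (Td g) p = Td (Xd g) p := by
  have h : Td g = pd 2 g := rfl
  rw [Xd_pd, Td_pd, h, pd_Xd hg 2 p, pd_comm hg 0 2,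
    if_neg (show ¬(2:Fin 3) = 1 by decide)]
  ring

lemma comm_YT {g : (Fin 3 → ℝ) → ℝ} (hg : ContDiff ℝ (⊤ : ℕ∞) g) (p : Fin 3 → ℝ) :
    Yd (Td g) p = Td (Yd g) p := by
  have h : Td g = pd 2 g := rfl
  rw [Yd_pd, Td_pd, h, pd_Yd hg 2 p, pd_comm hg 1 2,
    if_neg (show ¬(2:Fin 3) = 0 by decide)]
  ring


section OpRules
variable {g h : (Fin 3 → ℝ) → ℝ} (hg : ContDiff ℝ (⊤ : ℕ∞) g) (hh : ContDiff ℝ (⊤ : ℕ∞) h)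
  (p : Fin 3 → ℝ)

include hg hh in
lemma Xd_add : Xd (fun q => g q + h q) p = Xd g p + Xd h p := by
  rw [Xd_pd, Xd_pd, Xd_pd, pd_add (dA hg p) (dA hh p) 0, pd_add (dA hg p) (dA hh p) 2]; ring

include hg hh in
lemma Xd_sub : Xd (fun q => g q - h q) p = Xd g p - Xd h p := by
  rw [Xd_pd, Xd_pd, Xd_pd, pd_sub (dA hg p) (dA hh p) 0, pd_sub (dA hg p) (dA hh p) 2]; ring

include hg hh in
lemma Xd_mul : Xd (fun q => g q * h q) p = Xd g p * h p + g p * Xd h p := by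
  rw [Xd_pd, Xd_pd, Xd_pd, pd_mul (dA hg p) (dA hh p) 0, pd_mul (dA hg p) (dA hh p) 2]; ring

include hg in
lemma Xd_const_mul (c : ℝ) : Xd (fun q => c * g q) p = c * Xd g p := by
  rw [Xd_pd, Xd_pd, pd_const_mul (dA hg p) c 0, pd_const_mul (dA hg p) c 2]; ring

include hg hh in
lemma Yd_add : Yd (fun q => g q + h q) p = Yd g p + Yd h p := by
  rw [Yd_pd, Yd_pd, Yd_pd, pd_add (dA hg p) (dA hh p) 1, pd_add (dA hg p) (dA hh p) 2]; ring

include hg hh in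
lemma Yd_sub : Yd (fun q => g q - h q) p = Yd g p - Yd h p := by
  rw [Yd_pd, Yd_pd, Yd_pd, pd_sub (dA hg p) (dA hh p) 1, pd_sub (dA hg p) (dA hh p) 2]; ring

include hg hh in
lemma Yd_mul : Yd (fun q => g q * h q) p = Yd g p * h p + g p * Yd h p := by
  rw [Yd_pd, Yd_pd, Yd_pd, pd_mul (dA hg p) (dA hh p) 1, pd_mul (dA hg p) (dA hh p) 2]; ring

include hg in
lemma Yd_const_mul (c : ℝ) : Yd (fun q => c * g q) p = c * Yd g p := by
  rw [Yd_pd, Yd_pd, pd_const_mul (dA hg p) c 1, pd_const_mul (dA hg p) c 2]; ring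

include hg hh in
lemma Td_add : Td (fun q => g q + h q) p = Td g p + Td h p := by
  rw [Td_pd, Td_pd, Td_pd, pd_add (dA hg p) (dA hh p) 2]

include hg hh in
lemma Td_sub : Td (fun q => g q - h q) p = Td g p - Td h p := by
  rw [Td_pd, Td_pd, Td_pd, pd_sub (dA hg p) (dA hh p) 2]

include hg hh in
lemma Td_mul : Td (fun q => g q * h q) p = Td g p * h p + g p * Td h p := by
  rw [Td_pd, Td_pd, Td_pd, pd_mul (dA hg p) (dA hh p) 2]

include hg in
lemma Td_const_mul (c : ℝ) : Td (fun q => c * g q) p = c * Td g p := by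
  rw [Td_pd, Td_pd, pd_const_mul (dA hg p) c 2]

end OpRules

section Chain
variable {f : (Fin 3 → ℝ) → (Fin 3 → ℝ)} {g : (Fin 3 → ℝ) → ℝ}
  (hf : ContDiff ℝ (⊤ : ℕ∞) f) (hg : ContDiff ℝ (⊤ : ℕ∞) g) (p : Fin 3 → ℝ)

include hf hg in
lemma chainX_raw :
    Xd (fun q => g (f q)) p
      = pd 0 g (f p) * Xd (fun q => f q 0) p + pd 1 g (f p) * Xd (fun q => f q 1) p
        + pd 2 g (f p) * Xd (fun q => f q 2) p := by
  rw [Xd_pd (fun q => g (f q)), pd_comp hf hg 0 p, pd_comp hf hg 2 p,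
    Xd_pd (fun q => f q 0), Xd_pd (fun q => f q 1), Xd_pd (fun q => f q 2)]
  ring

include hf hg in
lemma chainY_raw :
    Yd (fun q => g (f q)) p
      = pd 0 g (f p) * Yd (fun q => f q 0) p + pd 1 g (f p) * Yd (fun q => f q 1) p
        + pd 2 g (f p) * Yd (fun q => f q 2) p := by
  rw [Yd_pd (fun q => g (f q)), pd_comp hf hg 1 p, pd_comp hf hg 2 p,
    Yd_pd (fun q => f q 0), Yd_pd (fun q => f q 1), Yd_pd (fun q => f q 2)]
  ring

include hf hg in
lemma chainT_raw :
    Td (fun q => g (f q)) p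
      = pd 0 g (f p) * Td (fun q => f q 0) p + pd 1 g (f p) * Td (fun q => f q 1) p
        + pd 2 g (f p) * Td (fun q => f q 2) p := by
  rw [Td_pd (fun q => g (f q)), pd_comp hf hg 2 p,
    Td_pd (fun q => f q 0), Td_pd (fun q => f q 1), Td_pd (fun q => f q 2)]

include hf hg in
lemma contact_chainX (hc : IsContact3 f) :
    Xd (fun q => g (f q)) p
      = Xd g (f p) * Xd (fun q => f q 0) p + Yd g (f p) * Xd (fun q => f q 1) p := by
  rw [chainX_raw hf hg p, Xd_pd g (f p), Yd_pd g (f p)]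
  have h2 : pd 2 g (f p) = Td g (f p) := rfl
  rw [h2]
  linear_combination Td g (f p) * hc.1 p

include hf hg in
lemma contact_chainY (hc : IsContact3 f) :
    Yd (fun q => g (f q)) p
      = Xd g (f p) * Yd (fun q => f q 0) p + Yd g (f p) * Yd (fun q => f q 1) p := by
  rw [chainY_raw hf hg p, Xd_pd g (f p), Yd_pd g (f p)]
  have h2 : pd 2 g (f p) = Td g (f p) := rfl
  rw [h2]
  linear_combination Td g (f p) * hc.2 p

end Chain


section ContactLemmas
variable {f : (Fin 3 → ℝ) → (Fin 3 → ℝ)} (hf : ContDiff ℝ (⊤ : ℕ∞) f) (hc : IsContact3 f)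

lemma lam3_eq (p : Fin 3 → ℝ) :
    lam3 f p = Xd (fun q => f q 0) p * Yd (fun q => f q 1) p
      - Xd (fun q => f q 1) p * Yd (fun q => f q 0) p := rfl

include hf hc in
lemma contact_Tf3 (p : Fin 3 → ℝ) :
    Td (fun q => f q 2) p = lam3 f p + 1/2 * (f p 0 * Td (fun q => f q 1) p)
      - 1/2 * (f p 1 * Td (fun q => f q 0) p) := by
  have cf0 : ContDiff ℝ (⊤ : ℕ∞) (fun q => f q 0) := contDiff_pi.mp hf 0
  have cf1 : ContDiff ℝ (⊤ : ℕ∞) (fun q => f q 1) := contDiff_pi.mp hf 1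
  have cf2 : ContDiff ℝ (⊤ : ℕ∞) (fun q => f q 2) := contDiff_pi.mp hf 2
  have hX : Xd (fun q => f q 2)
      = fun q => 1/2 * (f q 0 * Xd (fun r => f r 1) q)
        - 1/2 * (f q 1 * Xd (fun r => f r 0) q) :=
    funext fun q => by linear_combination hc.1 q
  have hY : Yd (fun q => f q 2)
      = fun q => 1/2 * (f q 0 * Yd (fun r => f r 1) q)
        - 1/2 * (f q 1 * Yd (fun r => f r 0) q) :=
    funext fun q => by linear_combination hc.2 q
  rw [← comm_XY cf2 p, hX, hY,
    Xd_sub ((contDiff_const (c := (1:ℝ)/2)).mul (cf0.mul (Yd_contDiff cf1)))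
      ((contDiff_const (c := (1:ℝ)/2)).mul (cf1.mul (Yd_contDiff cf0))) p,
    Yd_sub ((contDiff_const (c := (1:ℝ)/2)).mul (cf0.mul (Xd_contDiff cf1)))
      ((contDiff_const (c := (1:ℝ)/2)).mul (cf1.mul (Xd_contDiff cf0))) p,
    Xd_const_mul (cf0.mul (Yd_contDiff cf1)) p,
    Xd_const_mul (cf1.mul (Yd_contDiff cf0)) p,
    Yd_const_mul (cf0.mul (Xd_contDiff cf1)) p,
    Yd_const_mul (cf1.mul (Xd_contDiff cf0)) p,
    Xd_mul cf0 (Yd_contDiff cf1) p, Xd_mul cf1 (Yd_contDiff cf0) p,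
    Yd_mul cf0 (Xd_contDiff cf1) p, Yd_mul cf1 (Xd_contDiff cf0) p,
    lam3_eq p]
  linear_combination (1/2) * f p 0 * comm_XY cf1 p - (1/2) * f p 1 * comm_XY cf0 p

include hf hc in
lemma contact_chainT {g : (Fin 3 → ℝ) → ℝ} (hg : ContDiff ℝ (⊤ : ℕ∞) g) (p : Fin 3 → ℝ) :
    Td (fun q => g (f q)) p
      = Td g (f p) * lam3 f p + Xd g (f p) * Td (fun q => f q 0) p
        + Yd g (f p) * Td (fun q => f q 1) p := by
  rw [chainT_raw hf hg p, contact_Tf3 hf hc p, Xd_pd g (f p), Yd_pd g (f p),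
    Td_pd g (f p)]
  ring

include hf hc in
lemma contact_Xlam (p : Fin 3 → ℝ) :
    Xd (lam3 f) p = Xd (fun q => f q 1) p * Td (fun q => f q 0) p
      - Xd (fun q => f q 0) p * Td (fun q => f q 1) p := by
  have cf0 : ContDiff ℝ (⊤ : ℕ∞) (fun q => f q 0) := contDiff_pi.mp hf 0
  have cf1 : ContDiff ℝ (⊤ : ℕ∞) (fun q => f q 1) := contDiff_pi.mp hf 1
  have cf2 : ContDiff ℝ (⊤ : ℕ∞) (fun q => f q 2) := contDiff_pi.mp hf 2
  have hX : Xd (fun q => f q 2)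
      = fun q => 1/2 * (f q 0 * Xd (fun r => f r 1) q)
        - 1/2 * (f q 1 * Xd (fun r => f r 0) q) :=
    funext fun q => by linear_combination hc.1 q
  have hlam : lam3 f = fun q => Td (fun r => f r 2) q
      - 1/2 * (f q 0 * Td (fun r => f r 1) q) + 1/2 * (f q 1 * Td (fun r => f r 0) q) :=
    funext fun q => by linear_combination (contact_Tf3 hf hc q).symm
  rw [hlam,
    Xd_add ((Td_contDiff cf2).sub
        ((contDiff_const (c := (1:ℝ)/2)).mul (cf0.mul (Td_contDiff cf1))))
      ((contDiff_const (c := (1:ℝ)/2)).mul (cf1.mul (Td_contDiff cf0))) p,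
    Xd_sub (Td_contDiff cf2)
      ((contDiff_const (c := (1:ℝ)/2)).mul (cf0.mul (Td_contDiff cf1))) p,
    Xd_const_mul (cf0.mul (Td_contDiff cf1)) p,
    Xd_const_mul (cf1.mul (Td_contDiff cf0)) p,
    Xd_mul cf0 (Td_contDiff cf1) p, Xd_mul cf1 (Td_contDiff cf0) p,
    comm_XT cf2 p, comm_XT cf1 p, comm_XT cf0 p, hX,
    Td_sub ((contDiff_const (c := (1:ℝ)/2)).mul (cf0.mul (Xd_contDiff cf1)))
      ((contDiff_const (c := (1:ℝ)/2)).mul (cf1.mul (Xd_contDiff cf0))) p,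
    Td_const_mul (cf0.mul (Xd_contDiff cf1)) p,
    Td_const_mul (cf1.mul (Xd_contDiff cf0)) p,
    Td_mul cf0 (Xd_contDiff cf1) p, Td_mul cf1 (Xd_contDiff cf0) p]
  ring

include hf hc in
lemma contact_Ylam (p : Fin 3 → ℝ) :
    Yd (lam3 f) p = Yd (fun q => f q 1) p * Td (fun q => f q 0) p
      - Yd (fun q => f q 0) p * Td (fun q => f q 1) p := by
  have cf0 : ContDiff ℝ (⊤ : ℕ∞) (fun q => f q 0) := contDiff_pi.mp hf 0
  have cf1 : ContDiff ℝ (⊤ : ℕ∞) (fun q => f q 1) := contDiff_pi.mp hf 1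
  have cf2 : ContDiff ℝ (⊤ : ℕ∞) (fun q => f q 2) := contDiff_pi.mp hf 2
  have hY : Yd (fun q => f q 2)
      = fun q => 1/2 * (f q 0 * Yd (fun r => f r 1) q)
        - 1/2 * (f q 1 * Yd (fun r => f r 0) q) :=
    funext fun q => by linear_combination hc.2 q
  have hlam : lam3 f = fun q => Td (fun r => f r 2) q
      - 1/2 * (f q 0 * Td (fun r => f r 1) q) + 1/2 * (f q 1 * Td (fun r => f r 0) q) :=
    funext fun q => by linear_combination (contact_Tf3 hf hc q).symm
  rw [hlam,
    Yd_add ((Td_contDiff cf2).sub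
        ((contDiff_const (c := (1:ℝ)/2)).mul (cf0.mul (Td_contDiff cf1))))
      ((contDiff_const (c := (1:ℝ)/2)).mul (cf1.mul (Td_contDiff cf0))) p,
    Yd_sub (Td_contDiff cf2)
      ((contDiff_const (c := (1:ℝ)/2)).mul (cf0.mul (Td_contDiff cf1))) p,
    Yd_const_mul (cf0.mul (Td_contDiff cf1)) p,
    Yd_const_mul (cf1.mul (Td_contDiff cf0)) p,
    Yd_mul cf0 (Td_contDiff cf1) p, Yd_mul cf1 (Td_contDiff cf0) p,
    comm_YT cf2 p, comm_YT cf1 p, comm_YT cf0 p, hY,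
    Td_sub ((contDiff_const (c := (1:ℝ)/2)).mul (cf0.mul (Yd_contDiff cf1)))
      ((contDiff_const (c := (1:ℝ)/2)).mul (cf1.mul (Yd_contDiff cf0))) p,
    Td_const_mul (cf0.mul (Yd_contDiff cf1)) p,
    Td_const_mul (cf1.mul (Yd_contDiff cf0)) p,
    Td_mul cf0 (Yd_contDiff cf1) p, Td_mul cf1 (Yd_contDiff cf0) p]
  ring

end ContactLemmas


/-- For a smooth contact map `f` of `ℍ¹` and smooth `ω₁, ω₂ : ℝ³ → ℝ`, with
`a := (ω₁ ∘ f)·Xf¹ + (ω₂ ∘ f)·Xf²` and `b := (ω₁ ∘ f)·Yf¹ + (ω₂ ∘ f)·Yf²`, one has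
`XXb − XYa − Ta = λ(f)·[((XXω₂ − XYω₁ − Tω₁) ∘ f)·Xf¹ + ((YXω₂ − YYω₁ − Tω₂) ∘ f)·Xf²]`
and
`YXb − YYa − Tb = λ(f)·[((XXω₂ − XYω₁ − Tω₁) ∘ f)·Yf¹ + ((YXω₂ − YYω₁ − Tω₂) ∘ f)·Yf²]`
(the pullback by `f` commutes with the second-order Rumin operator `D` in `ℍ¹`). -/
theorem pullback_D_middle (f : (Fin 3 → ℝ) → (Fin 3 → ℝ))
    (hf : ContDiff ℝ (⊤ : ℕ∞) f) (hc : IsContact3 f)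
    (ω₁ ω₂ : (Fin 3 → ℝ) → ℝ) (hω₁ : ContDiff ℝ (⊤ : ℕ∞) ω₁) (hω₂ : ContDiff ℝ (⊤ : ℕ∞) ω₂)
    (a b : (Fin 3 → ℝ) → ℝ)
    (ha : a = fun q => ω₁ (f q) * Xd (fun r => f r 0) q + ω₂ (f q) * Xd (fun r => f r 1) q)
    (hb : b = fun q => ω₁ (f q) * Yd (fun r => f r 0) q + ω₂ (f q) * Yd (fun r => f r 1) q)
    (p : Fin 3 → ℝ) :
    (Xd (Xd b) p - Xd (Yd a) p - Td a p
      = lam3 f p *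
        ((Xd (Xd ω₂) (f p) - Xd (Yd ω₁) (f p) - Td ω₁ (f p)) * Xd (fun r => f r 0) p
          + (Yd (Xd ω₂) (f p) - Yd (Yd ω₁) (f p) - Td ω₂ (f p)) * Xd (fun r => f r 1) p))
    ∧ (Yd (Xd b) p - Yd (Yd a) p - Td b p
      = lam3 f p *
        ((Xd (Xd ω₂) (f p) - Xd (Yd ω₁) (f p) - Td ω₁ (f p)) * Yd (fun r => f r 0) p
          + (Yd (Xd ω₂) (f p) - Yd (Yd ω₁) (f p) - Td ω₂ (f p)) * Yd (fun r => f r 1) p)) := by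
  have cf0 : ContDiff ℝ (⊤ : ℕ∞) (fun q => f q 0) := contDiff_pi.mp hf 0
  have cf1 : ContDiff ℝ (⊤ : ℕ∞) (fun q => f q 1) := contDiff_pi.mp hf 1
  have cω1f : ContDiff ℝ (⊤ : ℕ∞) (fun q => ω₁ (f q)) := hω₁.comp hf
  have cω2f : ContDiff ℝ (⊤ : ℕ∞) (fun q => ω₂ (f q)) := hω₂.comp hf
  have cXω2f : ContDiff ℝ (⊤ : ℕ∞) (fun q => Xd ω₂ (f q)) := (Xd_contDiff hω₂).comp hf
  have cYω1f : ContDiff ℝ (⊤ : ℕ∞) (fun q => Yd ω₁ (f q)) := (Yd_contDiff hω₁).comp hf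
  have clam : ContDiff ℝ (⊤ : ℕ∞) (lam3 f) :=
    ((Xd_contDiff cf0).mul (Yd_contDiff cf1)).sub ((Xd_contDiff cf1).mul (Yd_contDiff cf0))
  have ca : ContDiff ℝ (⊤ : ℕ∞) a := by
    rw [ha]; exact (cω1f.mul (Xd_contDiff cf0)).add (cω2f.mul (Xd_contDiff cf1))
  have cb : ContDiff ℝ (⊤ : ℕ∞) b := by
    rw [hb]; exact (cω1f.mul (Yd_contDiff cf0)).add (cω2f.mul (Yd_contDiff cf1))
  have hD : ∀ q, Xd b q - Yd a q
      = (Xd ω₂ (f q) - Yd ω₁ (f q)) * lam3 f q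
        + ω₁ (f q) * Td (fun r => f r 0) q + ω₂ (f q) * Td (fun r => f r 1) q := by
    intro q
    rw [hb, ha,
      Xd_add (cω1f.mul (Yd_contDiff cf0)) (cω2f.mul (Yd_contDiff cf1)) q,
      Xd_mul cω1f (Yd_contDiff cf0) q, Xd_mul cω2f (Yd_contDiff cf1) q,
      Yd_add (cω1f.mul (Xd_contDiff cf0)) (cω2f.mul (Xd_contDiff cf1)) q,
      Yd_mul cω1f (Xd_contDiff cf0) q, Yd_mul cω2f (Xd_contDiff cf1) q,
      contact_chainX hf hω₁ q hc, contact_chainX hf hω₂ q hc,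
      contact_chainY hf hω₁ q hc, contact_chainY hf hω₂ q hc,
      lam3_eq q]
    linear_combination ω₁ (f q) * comm_XY cf0 q + ω₂ (f q) * comm_XY cf1 q
  have hDfun : (fun q => Xd b q - Yd a q)
      = fun q => (Xd ω₂ (f q) - Yd ω₁ (f q)) * lam3 f q
        + ω₁ (f q) * Td (fun r => f r 0) q + ω₂ (f q) * Td (fun r => f r 1) q :=
    funext hD
  have hTa : Td a p
      = (Td ω₁ (f p) * lam3 f p + Xd ω₁ (f p) * Td (fun r => f r 0) p
          + Yd ω₁ (f p) * Td (fun r => f r 1) p) * Xd (fun r => f r 0) p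
        + ω₁ (f p) * Td (Xd (fun r => f r 0)) p
        + (Td ω₂ (f p) * lam3 f p + Xd ω₂ (f p) * Td (fun r => f r 0) p
          + Yd ω₂ (f p) * Td (fun r => f r 1) p) * Xd (fun r => f r 1) p
        + ω₂ (f p) * Td (Xd (fun r => f r 1)) p := by
    rw [ha,
      Td_add (cω1f.mul (Xd_contDiff cf0)) (cω2f.mul (Xd_contDiff cf1)) p,
      Td_mul cω1f (Xd_contDiff cf0) p, Td_mul cω2f (Xd_contDiff cf1) p,
      contact_chainT hf hc hω₁ p, contact_chainT hf hc hω₂ p]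
    ring
  have hTb : Td b p
      = (Td ω₁ (f p) * lam3 f p + Xd ω₁ (f p) * Td (fun r => f r 0) p
          + Yd ω₁ (f p) * Td (fun r => f r 1) p) * Yd (fun r => f r 0) p
        + ω₁ (f p) * Td (Yd (fun r => f r 0)) p
        + (Td ω₂ (f p) * lam3 f p + Xd ω₂ (f p) * Td (fun r => f r 0) p
          + Yd ω₂ (f p) * Td (fun r => f r 1) p) * Yd (fun r => f r 1) p
        + ω₂ (f p) * Td (Yd (fun r => f r 1)) p := by
    rw [hb,
      Td_add (cω1f.mul (Yd_contDiff cf0)) (cω2f.mul (Yd_contDiff cf1)) p,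
      Td_mul cω1f (Yd_contDiff cf0) p, Td_mul cω2f (Yd_contDiff cf1) p,
      contact_chainT hf hc hω₁ p, contact_chainT hf hc hω₂ p]
    ring
  have hmain1 : Xd (Xd b) p - Xd (Yd a) p
      = ((Xd (Xd ω₂) (f p) * Xd (fun r => f r 0) p + Yd (Xd ω₂) (f p) * Xd (fun r => f r 1) p)
          - (Xd (Yd ω₁) (f p) * Xd (fun r => f r 0) p + Yd (Yd ω₁) (f p) * Xd (fun r => f r 1) p))
          * lam3 f p
        + (Xd ω₂ (f p) - Yd ω₁ (f p))
          * (Xd (fun r => f r 1) p * Td (fun r => f r 0) p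
            - Xd (fun r => f r 0) p * Td (fun r => f r 1) p)
        + (Xd ω₁ (f p) * Xd (fun r => f r 0) p + Yd ω₁ (f p) * Xd (fun r => f r 1) p)
          * Td (fun r => f r 0) p
        + ω₁ (f p) * Td (Xd (fun r => f r 0)) p
        + (Xd ω₂ (f p) * Xd (fun r => f r 0) p + Yd ω₂ (f p) * Xd (fun r => f r 1) p)
          * Td (fun r => f r 1) p
        + ω₂ (f p) * Td (Xd (fun r => f r 1)) p := by
    rw [← Xd_sub (Xd_contDiff cb) (Yd_contDiff ca) p, hDfun,
      Xd_add (((cXω2f.sub cYω1f).mul clam).add (cω1f.mul (Td_contDiff cf0)))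
        (cω2f.mul (Td_contDiff cf1)) p,
      Xd_add ((cXω2f.sub cYω1f).mul clam) (cω1f.mul (Td_contDiff cf0)) p,
      Xd_mul (cXω2f.sub cYω1f) clam p,
      Xd_mul cω1f (Td_contDiff cf0) p,
      Xd_mul cω2f (Td_contDiff cf1) p,
      Xd_sub cXω2f cYω1f p,
      contact_chainX hf (Xd_contDiff hω₂) p hc,
      contact_chainX hf (Yd_contDiff hω₁) p hc,
      contact_chainX hf hω₁ p hc, contact_chainX hf hω₂ p hc,
      contact_Xlam hf hc p,
      comm_XT cf0 p, comm_XT cf1 p]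
    ring
  have hmain2 : Yd (Xd b) p - Yd (Yd a) p
      = ((Xd (Xd ω₂) (f p) * Yd (fun r => f r 0) p + Yd (Xd ω₂) (f p) * Yd (fun r => f r 1) p)
          - (Xd (Yd ω₁) (f p) * Yd (fun r => f r 0) p + Yd (Yd ω₁) (f p) * Yd (fun r => f r 1) p))
          * lam3 f p
        + (Xd ω₂ (f p) - Yd ω₁ (f p))
          * (Yd (fun r => f r 1) p * Td (fun r => f r 0) p
            - Yd (fun r => f r 0) p * Td (fun r => f r 1) p)
        + (Xd ω₁ (f p) * Yd (fun r => f r 0) p + Yd ω₁ (f p) * Yd (fun r => f r 1) p)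
          * Td (fun r => f r 0) p
        + ω₁ (f p) * Td (Yd (fun r => f r 0)) p
        + (Xd ω₂ (f p) * Yd (fun r => f r 0) p + Yd ω₂ (f p) * Yd (fun r => f r 1) p)
          * Td (fun r => f r 1) p
        + ω₂ (f p) * Td (Yd (fun r => f r 1)) p := by
    rw [← Yd_sub (Xd_contDiff cb) (Yd_contDiff ca) p, hDfun,
      Yd_add (((cXω2f.sub cYω1f).mul clam).add (cω1f.mul (Td_contDiff cf0)))
        (cω2f.mul (Td_contDiff cf1)) p,
      Yd_add ((cXω2f.sub cYω1f).mul clam) (cω1f.mul (Td_contDiff cf0)) p,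
      Yd_mul (cXω2f.sub cYω1f) clam p,
      Yd_mul cω1f (Td_contDiff cf0) p,
      Yd_mul cω2f (Td_contDiff cf1) p,
      Yd_sub cXω2f cYω1f p,
      contact_chainY hf (Xd_contDiff hω₂) p hc,
      contact_chainY hf (Yd_contDiff hω₁) p hc,
      contact_chainY hf hω₁ p hc, contact_chainY hf hω₂ p hc,
      contact_Ylam hf hc p,
      comm_YT cf0 p, comm_YT cf1 p]
    ring
  constructor
  · linear_combination hmain1 - hTa
  · linear_combination hmain2 - hTb
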